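/- arXiv:2006.08734 — 7 statements merged into one kernel-verified Lean document; each statement's English description precedes it below -/
import Mathlib

section
/- A loop Q satisfies the identity x(x·yz) = (x·xy)z for all x,y,z if and only if Q is a left alternative loop (x·xy = xx·y) in which every square x² belongs to the left nucleus N_λ. -/
/-- A loop: binary operation with two-sided identity and unique divisions. -/
class Loop (Q : Type*) extends Mul Q, One Q where
  ld : Q → Q → Q   -- left division: `ld x y = x \ y`
  rd : Q → Q → Q   -- right division: `rd x y = x / y`
  one_mul : ∀ x : Q, 1 * x = x
  mul_one : ∀ x : Q, x * 1 = x
  mul_ld : ∀ x y : Q, x * ld x y = y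
  ld_mul : ∀ x y : Q, ld x (x * y) = y
  rd_mul : ∀ x y : Q, rd x y * y = x
  mul_rd : ∀ x y : Q, rd (x * y) y = x

namespace Loop
variable {Q : Type*} [Loop Q]
/-- left inverse `x^λ = 1 / x` -/
def linv (x : Q) : Q := rd 1 x
/-- right inverse `x^ρ = x \ 1` -/
def rinv (x : Q) : Q := ld x 1
/-- left nucleus -/
def Nl (Q : Type*) [Loop Q] : Set Q := {a | ∀ x y : Q, a * (x * y) = (a * x) * y}
/-- middle nucleus -/
def Nm (Q : Type*) [Loop Q] : Set Q := {a | ∀ x y : Q, x * (a * y) = (x * a) * y}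
/-- right nucleus -/
def Nr (Q : Type*) [Loop Q] : Set Q := {a | ∀ x y : Q, (x * y) * a = x * (y * a)}
/-- the nucleus -/
def N (Q : Type*) [Loop Q] : Set Q := Nl Q ∩ Nm Q ∩ Nr Q
/-- `S` is a subloop -/
def IsSubloop (S : Set Q) : Prop :=
  (1 : Q) ∈ S ∧ ∀ a ∈ S, ∀ b ∈ S, a * b ∈ S ∧ ld a b ∈ S ∧ rd a b ∈ S
/-- normality of a subloop via the standard equational characterization -/
def IsNormal (S : Set Q) : Prop :=
  IsSubloop S ∧ ∀ x y : Q,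
    (x * ·) '' S = (· * x) '' S ∧
    (· * y) '' ((x * ·) '' S) = (x * ·) '' ((· * y) '' S) ∧
    (x * ·) '' ((y * ·) '' S) = ((x * y) * ·) '' S
end Loop
open Loop in
theorem stmt2 {Q : Type*} [Loop Q] :
    (∀ x y z : Q, x * (x * (y * z)) = (x * (x * y)) * z) ↔
      ((∀ x y : Q, x * (x * y) = (x * x) * y) ∧ ∀ x : Q, x * x ∈ Nl Q) := by
  constructor
  · intro hLC
    have hLAP : ∀ x y : Q, x * (x * y) = (x * x) * y := fun x y => by
      simpa only [Loop.one_mul, Loop.mul_one] using hLC x 1 y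
    refine ⟨hLAP, fun x y z => ?_⟩
    rw [← hLAP x (y * z), ← hLAP x y]
    exact hLC x y z
  · rintro ⟨hLAP, hsq⟩ x y z
    rw [hLAP x (y * z), hsq x y z, ← hLAP x y]
end

section
/- A loop Q satisfies x(x·yz) = (x·xy)z for all x,y,z if and only if Q has the left inverse property and every square x² belongs to the left nucleus N_λ. -/
/-!
Putting `y = 1` in `x(x·yz) = (x·xy)z` gives the left alternative law `x·xz = xx·z`; with it the
identity says exactly that `xx` is in the left nucleus, and its instance `x^λ(x^λ·xy) = (x^λ·x^λx)y`
becomes `x^λ(x^λ·xy) = x^λy`, which gives the left inverse property after cancelling `x^λ`. Conversely, if `xx ∈ N_λ` then `xx·x^λ = x` (cancel `x`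
in `xx·(x^λ x) = (xx·x^λ)x`), so `xx·t = (xx·x^λ)(xt) = x·xt` by the LIP, and the identity
follows from `xx ∈ N_λ` once more.
-/

namespace Loop

variable {Q : Type*} [Loop Q]

theorem mul_left_cancel {x a b : Q} (h : x * a = x * b) : a = b := by
  rw [← ld_mul x a, h, ld_mul]

theorem mul_right_cancel {x a b : Q} (h : a * x = b * x) : a = b := by
  rw [← mul_rd a x, h, mul_rd]

theorem linv_mul_cancel (x : Q) : linv x * x = 1 :=
  rd_mul 1 x

theorem mul_mul_eq_mul_self_mul {x : Q} (h : ∀ y z : Q, x * (x * (y * z)) = (x * (x * y)) * z)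
    (z : Q) : x * (x * z) = (x * x) * z := by
  simpa only [one_mul, mul_one] using h 1 z

theorem linv_mul_cancel_left (h : ∀ x y z : Q, x * (x * (y * z)) = (x * (x * y)) * z)
    (x y : Q) : linv x * (x * y) = y := by
  refine mul_left_cancel (x := linv x) ?_
  simpa only [linv_mul_cancel, mul_one] using h (linv x) x y

theorem mul_self_mem_Nl {x : Q} (h : ∀ y z : Q, x * (x * (y * z)) = (x * (x * y)) * z) :
    x * x ∈ Nl Q := fun u v => by
  rw [← mul_mul_eq_mul_self_mul h, h, mul_mul_eq_mul_self_mul h]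

theorem mul_self_mul_linv {x : Q} (hsq : x * x ∈ Nl Q) : (x * x) * linv x = x := by
  refine mul_right_cancel (x := x) ?_
  rw [← hsq, linv_mul_cancel, mul_one]

theorem mul_mul_eq_mul_self_mul_of_mem_Nl {x : Q} (hlip : ∀ y, linv x * (x * y) = y)
    (hsq : x * x ∈ Nl Q) (t : Q) : x * (x * t) = (x * x) * t :=
  calc x * (x * t) = ((x * x) * linv x) * (x * t) := by rw [mul_self_mul_linv hsq]
    _ = (x * x) * (linv x * (x * t)) := (hsq _ _).symm
    _ = (x * x) * t := by rw [hlip]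

end Loop

open Loop in
theorem stmt3 {Q : Type*} [Loop Q] :
    (∀ x y z : Q, x * (x * (y * z)) = (x * (x * y)) * z) ↔
      ((∀ x y : Q, linv x * (x * y) = y) ∧ ∀ x : Q, x * x ∈ Nl Q) := by
  refine ⟨fun h => ⟨linv_mul_cancel_left h, fun x => mul_self_mem_Nl (h x)⟩, ?_⟩
  rintro ⟨hlip, hsq⟩ x y z
  have hx := mul_mul_eq_mul_self_mul_of_mem_Nl (hlip x) (hsq x)
  rw [hx, hx, hsq]
end

section
/- Let Q be a loop with a subloop S contained in N_λ ∩ N_μ. If T_x(s) ∈ S and T_x^{-1}(s) ∈ S for every x ∈ Q and s ∈ S, then S is a normal subloop of Q. Moreover L_{xy}^{-1}L_xL_y(s) = T_{xy}^{-1}T_xT_y(s) for all x,y ∈ Q and s ∈ S. -/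
/-!
Write `xS` and `Sx` for the images of `S` under `L_x` and `R_x`. Closure of `S` under `T_x` and
`T_x⁻¹` says exactly `xS = Sx`, while `S ⊆ N_μ` and `S ⊆ N_λ` give `(xS)y = x(Sy)` and
`(Sx)y = S(xy)`. Chaining these, `x(yS) = x(Sy) = (xS)y = (Sx)y = S(xy) = (xy)S`.
The identity for inner mappings comes from moving `s` across `y` and then across `x`:
`x(ys) = x(T_y(s)·y) = (x·T_y(s))y = (T_xT_y(s)·x)y = T_xT_y(s)·xy`.
-/

namespace Loop

variable {Q : Type*} [Loop Q] {S : Set Q}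

theorem image_mul_left_eq_image_mul_right
    (hT : ∀ x : Q, ∀ s ∈ S, rd (x * s) x ∈ S ∧ ld x (s * x) ∈ S) (x : Q) :
    (x * ·) '' S = (· * x) '' S := by
  ext z
  constructor
  · rintro ⟨s, hs, rfl⟩
    exact ⟨rd (x * s) x, (hT x s hs).1, rd_mul _ _⟩
  · rintro ⟨s, hs, rfl⟩
    exact ⟨ld x (s * x), (hT x s hs).2, mul_ld _ _⟩

theorem image_mul_right_image_mul_left_of_subset_Nm (hS : S ⊆ Nm Q) (x y : Q) :
    (· * y) '' ((x * ·) '' S) = (x * ·) '' ((· * y) '' S) := by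
  rw [Set.image_image, Set.image_image]
  exact Set.image_congr fun s hs => ((hS hs) x y).symm

theorem image_mul_right_image_mul_right_of_subset_Nl (hS : S ⊆ Nl Q) (x y : Q) :
    (· * y) '' ((· * x) '' S) = (· * (x * y)) '' S := by
  rw [Set.image_image]
  exact Set.image_congr fun s hs => ((hS hs) x y).symm

theorem isNormal_of_subset_Nl_inter_Nm (hsub : IsSubloop S) (hN : S ⊆ Nl Q ∩ Nm Q)
    (hT : ∀ x : Q, ∀ s ∈ S, rd (x * s) x ∈ S ∧ ld x (s * x) ∈ S) : IsNormal S := by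
  have hl : S ⊆ Nl Q := fun s hs => (hN hs).1
  have hm : S ⊆ Nm Q := fun s hs => (hN hs).2
  refine ⟨hsub, fun x y => ⟨image_mul_left_eq_image_mul_right hT x,
    image_mul_right_image_mul_left_of_subset_Nm hm x y, ?_⟩⟩
  calc (x * ·) '' ((y * ·) '' S) = (x * ·) '' ((· * y) '' S) := by
        rw [image_mul_left_eq_image_mul_right hT y]
    _ = (· * y) '' ((x * ·) '' S) := (image_mul_right_image_mul_left_of_subset_Nm hm x y).symm
    _ = (· * y) '' ((· * x) '' S) := by rw [image_mul_left_eq_image_mul_right hT x]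
    _ = (· * (x * y)) '' S := image_mul_right_image_mul_right_of_subset_Nl hl x y
    _ = ((x * y) * ·) '' S := (image_mul_left_eq_image_mul_right hT (x * y)).symm

theorem mul_mul_eq_rd_mul_mul {x a : Q} (ha : a ∈ Nm Q) (hxa : rd (x * a) x ∈ Nl Q) (y : Q) :
    x * (a * y) = rd (x * a) x * (x * y) :=
  calc x * (a * y) = (x * a) * y := ha x y
    _ = (rd (x * a) x * x) * y := by rw [rd_mul]
    _ = rd (x * a) x * (x * y) := (hxa x y).symm

end Loop

open Loop in
theorem stmt8 {Q : Type*} [Loop Q] (S : Set Q) (hsub : IsSubloop S)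
    (hN : S ⊆ Nl Q ∩ Nm Q)
    (hT : ∀ x : Q, ∀ s ∈ S, rd (x * s) x ∈ S ∧ ld x (s * x) ∈ S) :
    IsNormal S ∧
      ∀ x y : Q, ∀ s ∈ S,
        ld (x * y) (x * (y * s)) =
          ld (x * y) (rd (x * rd (y * s) y) x * (x * y)) := by
  refine ⟨isNormal_of_subset_Nl_inter_Nm hsub hN hT, fun x y s hs => ?_⟩
  have hTy : rd (y * s) y ∈ S := (hT y s hs).1
  have hTxy : rd (x * rd (y * s) y) x ∈ S := (hT x _ hTy).1
  rw [← mul_mul_eq_rd_mul_mul (hN hTy).2 (hN hTxy).1, rd_mul]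
end

section
/- In every LC loop Q, the left nucleus N_λ equals the middle nucleus N_μ and this common nucleus is a normal subloop of Q. -/
/-! Write `L x` for left multiplication and `C` for the centralizer of the right translations
in `Sym Q`. Then `a ∈ Nl ↔ L a ∈ C`, every `φ ∈ C` equals `L (φ 1)`, and `φ * L y = L (φ y)`.
The LC law says exactly that `L x * L x ∈ C`; hence `L y * φ * L y = φ⁻¹ * (φ * L y) ^ 2 ∈ C`,
so `C` is stable under conjugation by every `L y` and its inverse. Conjugating `L a`, `a ∈ Nl`,
gives `y * a ∈ Nl * y` and `a * y ∈ y * Nl`, and in particular `L y * L a = L (y * a)`, i.e.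
`a ∈ Nm`. Conversely, for `a ∈ Nm` we have `L y * L a = L (y * a)`, so
`(L y)⁻¹ * L a * L y * (L a)⁻¹ = (L y ^ 2)⁻¹ * L (y * a) ^ 2 * (L a ^ 2)⁻¹ ∈ C`, which yields
`L a * L y = L (a * y)`. Normality of `N = Nl = Nm` then follows from `x N = N x` and the
associativity laws defining `Nl` and `Nm`. -/

namespace Loop
variable {Q : Type*} [Loop Q]

def leftMul (x : Q) : Equiv.Perm Q where
  toFun := (x * ·)
  invFun := ld x
  left_inv := ld_mul x
  right_inv := mul_ld x

def rightMul (x : Q) : Equiv.Perm Q where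
  toFun := (· * x)
  invFun := (rd · x)
  left_inv := (mul_rd · x)
  right_inv := (rd_mul · x)

@[simp] lemma leftMul_apply (x y : Q) : leftMul x y = x * y := rfl

@[simp] lemma leftMul_symm_apply (x y : Q) : (leftMul x).symm y = ld x y := rfl

@[simp] lemma rightMul_apply (x y : Q) : rightMul x y = y * x := rfl

lemma leftMul_one : leftMul (1 : Q) = 1 := Equiv.ext Loop.one_mul

variable (Q) in
/-- `φ ↦ φ 1` identifies this subgroup with `Nl Q`, with inverse `a ↦ leftMul a`. -/
abbrev rightMulCentralizer : Subgroup (Equiv.Perm Q) :=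
  Subgroup.centralizer (Set.range rightMul)

lemma mem_rightMulCentralizer {φ : Equiv.Perm Q} :
    φ ∈ rightMulCentralizer Q ↔ ∀ y z, φ (y * z) = φ y * z := by
  simp only [Subgroup.mem_centralizer_iff, Set.forall_mem_range, Equiv.ext_iff,
    Equiv.Perm.mul_apply, rightMul_apply]
  exact ⟨fun h y z => (h z y).symm, fun h z y => (h y z).symm⟩

lemma mul_leftMul_of_mem {φ : Equiv.Perm Q} (hφ : φ ∈ rightMulCentralizer Q) (y : Q) :
    φ * leftMul y = leftMul (φ y) :=
  Equiv.ext (mem_rightMulCentralizer.mp hφ y)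

lemma eq_leftMul_of_mem {φ : Equiv.Perm Q} (hφ : φ ∈ rightMulCentralizer Q) :
    φ = leftMul (φ 1) := by
  simpa [leftMul_one] using mul_leftMul_of_mem hφ 1

lemma leftMul_mem_rightMulCentralizer_iff {a : Q} :
    leftMul a ∈ rightMulCentralizer Q ↔ a ∈ Nl Q := by
  simp only [mem_rightMulCentralizer, leftMul_apply, Nl, Set.mem_ofPred_eq]

lemma apply_one_mem_Nl {φ : Equiv.Perm Q} (hφ : φ ∈ rightMulCentralizer Q) : φ 1 ∈ Nl Q :=
  leftMul_mem_rightMulCentralizer_iff.mp (eq_leftMul_of_mem hφ ▸ hφ)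

lemma mem_Nl_iff {a : Q} : a ∈ Nl Q ↔ ∀ x, leftMul a * leftMul x = leftMul (a * x) := by
  simp only [Nl, Set.mem_ofPred_eq, Equiv.ext_iff, Equiv.Perm.mul_apply, leftMul_apply]

lemma mem_Nm_iff {a : Q} : a ∈ Nm Q ↔ ∀ x, leftMul x * leftMul a = leftMul (x * a) := by
  simp only [Nm, Set.mem_ofPred_eq, Equiv.ext_iff, Equiv.Perm.mul_apply, leftMul_apply]

lemma eq_mul_of_leftMul_mul_eq {p q c : Q} (h : leftMul p * leftMul q = leftMul c) :
    c = p * q := by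
  simpa [Loop.mul_one] using (congrArg (· 1) h).symm

lemma isSubloop_Nl : IsSubloop (Nl Q) := by
  have hL : ∀ a ∈ Nl Q, leftMul a ∈ rightMulCentralizer Q :=
    fun a ha => leftMul_mem_rightMulCentralizer_iff.mpr ha
  refine ⟨by simpa using apply_one_mem_Nl (one_mem (rightMulCentralizer Q)),
    fun a ha b hb => ⟨?_, ?_, ?_⟩⟩
  · simpa [Loop.mul_one] using apply_one_mem_Nl (mul_mem (hL a ha) (hL b hb))
  · simpa [Loop.mul_one] using apply_one_mem_Nl (mul_mem (inv_mem (hL a ha)) (hL b hb))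
  · have hφ := mul_mem (hL a ha) (inv_mem (hL b hb))
    have hb1 : ld b b = 1 := by simpa [Loop.mul_one] using ld_mul b 1
    have h : (leftMul a * (leftMul b)⁻¹) 1 * b = a := by
      rw [← mem_rightMulCentralizer.mp hφ, Loop.one_mul]
      simp [hb1, Loop.mul_one]
    rw [← h, mul_rd]
    exact apply_one_mem_Nl hφ

section LCLoop

variable (hlc : ∀ x y z : Q, x * (x * (y * z)) = (x * (x * y)) * z)
include hlc

lemma leftMul_mul_self_mem (x : Q) : leftMul x * leftMul x ∈ rightMulCentralizer Q :=
  mem_rightMulCentralizer.mpr (hlc x)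

lemma leftMul_mul_mul_leftMul_mem {φ : Equiv.Perm Q} (hφ : φ ∈ rightMulCentralizer Q) (y : Q) :
    leftMul y * φ * leftMul y ∈ rightMulCentralizer Q := by
  -- `φ * L y = L (φ y)`, whose square lies in the centralizer by the LC law
  have h : leftMul y * φ * leftMul y = φ⁻¹ * ((φ * leftMul y) * (φ * leftMul y)) := by group
  rw [h, mul_leftMul_of_mem hφ]
  exact mul_mem (inv_mem hφ) (leftMul_mul_self_mem hlc _)

lemma leftMul_conj_mem {φ : Equiv.Perm Q} (hφ : φ ∈ rightMulCentralizer Q) (y : Q) :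
    leftMul y * φ * (leftMul y)⁻¹ ∈ rightMulCentralizer Q := by
  have h : leftMul y * φ * (leftMul y)⁻¹ =
      leftMul y * φ * leftMul y * (leftMul y * leftMul y)⁻¹ := by group
  rw [h]
  exact mul_mem (leftMul_mul_mul_leftMul_mem hlc hφ y) (inv_mem (leftMul_mul_self_mem hlc y))

lemma leftMul_inv_conj_mem {φ : Equiv.Perm Q} (hφ : φ ∈ rightMulCentralizer Q) (y : Q) :
    (leftMul y)⁻¹ * φ * leftMul y ∈ rightMulCentralizer Q := by
  have h : (leftMul y)⁻¹ * φ * leftMul y =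
      (leftMul y * leftMul y)⁻¹ * (leftMul y * φ * leftMul y) := by group
  rw [h]
  exact mul_mem (inv_mem (leftMul_mul_self_mem hlc y)) (leftMul_mul_mul_leftMul_mem hlc hφ y)

lemma exists_leftMul_mul_eq_mul_leftMul {a : Q} (ha : a ∈ Nl Q) (x : Q) :
    ∃ n ∈ Nl Q, leftMul x * leftMul a = leftMul n * leftMul x := by
  have hφ := leftMul_conj_mem hlc (leftMul_mem_rightMulCentralizer_iff.mpr ha) x
  refine ⟨_, apply_one_mem_Nl hφ, ?_⟩
  rw [← eq_leftMul_of_mem hφ]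
  group

lemma exists_leftMul_mul_eq_leftMul_mul {a : Q} (ha : a ∈ Nl Q) (x : Q) :
    ∃ m ∈ Nl Q, leftMul a * leftMul x = leftMul x * leftMul m := by
  have hφ := leftMul_inv_conj_mem hlc (leftMul_mem_rightMulCentralizer_iff.mpr ha) x
  refine ⟨_, apply_one_mem_Nl hφ, ?_⟩
  rw [← eq_leftMul_of_mem hφ]
  group

lemma Nl_subset_Nm : Nl Q ⊆ Nm Q := by
  intro a ha
  refine mem_Nm_iff.mpr fun x => ?_
  obtain ⟨n, hn, h⟩ := exists_leftMul_mul_eq_mul_leftMul hlc ha x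
  have h' := h.trans (mem_Nl_iff.mp hn x)
  rwa [← eq_mul_of_leftMul_mul_eq h']

lemma Nm_subset_Nl : Nm Q ⊆ Nl Q := by
  intro a ha
  have hNm := mem_Nm_iff.mp ha
  refine mem_Nl_iff.mpr fun y => ?_
  set ψ := (leftMul y)⁻¹ * leftMul a * leftMul y * (leftMul a)⁻¹ with hψ_def
  have hψ : ψ ∈ rightMulCentralizer Q := by
    have h : ψ = (leftMul y * leftMul y)⁻¹ * (leftMul (y * a) * leftMul (y * a)) *
        (leftMul a * leftMul a)⁻¹ := by
      rw [hψ_def, ← hNm y]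
      group
    rw [h]
    exact mul_mem (mul_mem (inv_mem (leftMul_mul_self_mem hlc y))
      (leftMul_mul_self_mem hlc _)) (inv_mem (leftMul_mul_self_mem hlc a))
  have hn : ψ 1 ∈ Nm Q := Nl_subset_Nm hlc (apply_one_mem_Nl hψ)
  have h : leftMul a * leftMul y = leftMul ((y * ψ 1) * a) := calc
    leftMul a * leftMul y = leftMul y * ψ * leftMul a := by rw [hψ_def]; group
    _ = leftMul y * leftMul (ψ 1) * leftMul a := by rw [← eq_leftMul_of_mem hψ]
    _ = leftMul ((y * ψ 1) * a) := by rw [mem_Nm_iff.mp hn y, hNm]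
  rwa [← eq_mul_of_leftMul_mul_eq h]

lemma Nl_eq_Nm : Nl Q = Nm Q :=
  (Nl_subset_Nm hlc).antisymm (Nm_subset_Nl hlc)

lemma image_mul_left_Nl (x : Q) : (x * ·) '' Nl Q = (· * x) '' Nl Q := by
  ext t
  constructor
  · rintro ⟨a, ha, rfl⟩
    obtain ⟨n, hn, h⟩ := exists_leftMul_mul_eq_mul_leftMul hlc ha x
    exact ⟨n, hn, eq_mul_of_leftMul_mul_eq (h.trans (mem_Nl_iff.mp hn x))⟩
  · rintro ⟨a, ha, rfl⟩
    obtain ⟨m, hm, h⟩ := exists_leftMul_mul_eq_leftMul_mul hlc ha x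
    exact ⟨m, hm, eq_mul_of_leftMul_mul_eq (h.trans (mem_Nm_iff.mp (Nl_subset_Nm hlc hm) x))⟩

lemma isNormal_Nl : IsNormal (Nl Q) := by
  have hmid : ∀ x y : Q, (· * y) '' ((x * ·) '' Nl Q) = (x * ·) '' ((· * y) '' Nl Q) := by
    intro x y
    simp only [Set.image_image]
    exact Set.image_congr fun a ha => (Nl_subset_Nm hlc ha x y).symm
  refine ⟨isSubloop_Nl, fun x y => ⟨image_mul_left_Nl hlc x, hmid x y, ?_⟩⟩
  calc (x * ·) '' ((y * ·) '' Nl Q)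
      = (x * ·) '' ((· * y) '' Nl Q) := by rw [image_mul_left_Nl hlc y]
    _ = (· * y) '' ((· * x) '' Nl Q) := by rw [← hmid, image_mul_left_Nl hlc x]
    _ = (· * (x * y)) '' Nl Q := by
      simp only [Set.image_image]
      exact Set.image_congr fun a ha => (ha x y).symm
    _ = ((x * y) * ·) '' Nl Q := (image_mul_left_Nl hlc (x * y)).symm

end LCLoop

end Loop

open Loop in
theorem stmt11 {Q : Type*} [Loop Q]
    (hlc : ∀ x y z : Q, x * (x * (y * z)) = (x * (x * y)) * z) :
    Nl Q = Nm Q ∧ IsNormal (Nm Q) :=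
  ⟨Nl_eq_Nm hlc, Nl_eq_Nm hlc ▸ isNormal_Nl hlc⟩
end

section
/- A left Bol loop Q satisfies the LC identity x(x·yz) = (x·xy)z if and only if x² ∈ N_λ for every x ∈ Q. -/
namespace Loop

theorem mul_mul_self_left_of_leftBol {Q : Type*} [Loop Q]
    (hbol : ∀ x y z : Q, x * (y * (x * z)) = (x * (y * x)) * z) (x z : Q) :
    x * (x * z) = (x * x) * z := by
  simpa only [one_mul] using hbol x 1 z

end Loop

open Loop in
theorem stmt12 {Q : Type*} [Loop Q]
    (hbol : ∀ x y z : Q, x * (y * (x * z)) = (x * (y * x)) * z) :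
    (∀ x y z : Q, x * (x * (y * z)) = (x * (x * y)) * z) ↔
      (∀ x : Q, x * x ∈ Nl Q) := by
  -- left alternativity rewrites `x * (x * w)` to `(x * x) * w` on both sides of LC
  simp only [mul_mul_self_left_of_leftBol hbol, Nl, Set.mem_ofPred_eq]
end

section
/- In an Osborn loop Q, the identity R_x R_{x^λ} L_{x^λ} L_x = id holds; that is, ((x^λ·xy)·x^λ)·x = y for all x,y. -/
open Loop in
theorem stmt14 {Q : Type*} [Loop Q]
    (hosb : ∀ x y z : Q, ld (linv x) y * (z * x) = x * ((y * z) * x)) :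
    ∀ x y : Q, ((linv x * (x * y)) * linv x) * x = y := by
  intro x y
  have h := hosb x (linv x * (x * y)) (linv x)
  rw [ld_mul, show linv x * x = 1 from rd_mul 1 x, Loop.mul_one] at h
  have := congrArg (ld x) h
  rw [ld_mul, ld_mul] at this; exact this.symm
end

section
/- In an Osborn loop Q, R_x^{-1}L_yR_x = L_{x^λ}^{-1}L_{x^λ y} and L_x^{-1}R_yL_x = R_{x^ρ}^{-1}R_{yx^ρ} for all x,y; consequently the left multiplication group and the right multiplication group are normal subgroups of the multiplication group of Q. -/
namespace Loop
variable {Q : Type*} [Loop Q]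
/-- left translation as a permutation -/
def Lperm (x : Q) : Equiv.Perm Q :=
  ⟨(x * ·), ld x, fun y => ld_mul x y, fun y => mul_ld x y⟩
/-- right translation as a permutation -/
def Rperm (x : Q) : Equiv.Perm Q :=
  ⟨(· * x), fun y => rd y x, fun y => mul_rd y x, fun y => rd_mul y x⟩
/-- multiplication group -/
def Mlt (Q : Type*) [Loop Q] : Subgroup (Equiv.Perm Q) :=
  Subgroup.closure (Set.range (Lperm (Q := Q)) ∪ Set.range (Rperm (Q := Q)))
/-- left multiplication group -/
def MltL (Q : Type*) [Loop Q] : Subgroup (Equiv.Perm Q) :=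
  Subgroup.closure (Set.range (Lperm (Q := Q)))
/-- right multiplication group -/
def MltR (Q : Type*) [Loop Q] : Subgroup (Equiv.Perm Q) :=
  Subgroup.closure (Set.range (Rperm (Q := Q)))
end Loop

/-!
Evaluated at a point, each conjugation identity is one instance of the Osborn identity
`x^λ\v · zx = x(vz·x)`, in the form `x^λ\v · zx = x^λ\(vz) · x`; for right multiplications it is
used at `x^ρ`, whose left inverse is `x`. The Osborn identity at `z/x` gives
`R_x L_y R_x⁻¹ = L_x⁻¹ L_{x^λ\y}`, and the case `y = x` of the second identity,
`L_x⁻¹ R_x L_x = R_{x^ρ}⁻¹`, turns it into `L_x R_y L_x⁻¹ = R_x⁻¹ R_{y/x^ρ}`. So conjugation by each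
generator of `Mlt(Q)` and by its inverse maps the generators of `Mlt_λ(Q)` and `Mlt_ρ(Q)` into these
groups.
-/

namespace Subgroup

variable {G : Type*} [Group G]

theorem mem_normalizer_closure_of_conj_mem {s : Set G} {g : G}
    (hconj : ∀ a ∈ s, g * a * g⁻¹ ∈ closure s) (hconj_inv : ∀ a ∈ s, g⁻¹ * a * g ∈ closure s) :
    g ∈ normalizer (closure s : Set G) := by
  rw [mem_normalizer_iff_map_conj_eq, MonoidHom.map_closure]
  refine le_antisymm ((closure_le _).mpr ?_) ((closure_le _).mpr fun a ha => ?_)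
  · rintro _ ⟨a, ha, rfl⟩
    exact hconj a ha
  · rw [← MonoidHom.map_closure]
    exact ⟨_, hconj_inv a ha, by simp [mul_assoc]⟩

end Subgroup

namespace Loop

variable {Q : Type*} [Loop Q]

def IsOsborn (Q : Type*) [Loop Q] : Prop :=
  ∀ x y z : Q, ld (linv x) y * (z * x) = x * ((y * z) * x)

theorem Rperm_one : Rperm (1 : Q) = 1 := Equiv.ext mul_one

theorem mul_rinv (x : Q) : x * rinv x = 1 := mul_ld x 1

theorem linv_rinv (x : Q) : linv (rinv x) = x := by
  rw [linv, ← mul_rinv x, mul_rd]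

theorem Lperm_mem_MltL (x : Q) : Lperm x ∈ MltL Q := Subgroup.subset_closure ⟨x, rfl⟩

theorem Rperm_mem_MltR (x : Q) : Rperm x ∈ MltR Q := Subgroup.subset_closure ⟨x, rfl⟩

namespace IsOsborn

variable (hQ : IsOsborn Q)
include hQ

theorem ld_linv_mul_mul (x v z : Q) : ld (linv x) v * (z * x) = ld (linv x) (v * z) * x := by
  have h := hQ x (v * z) 1
  rw [one_mul, mul_one] at h
  rw [hQ, h]

theorem ld_mul_mul_rinv (x v z : Q) : ld x v * (z * rinv x) = ld x (v * z) * rinv x := by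
  simpa only [linv_rinv] using hQ.ld_linv_mul_mul (rinv x) v z

theorem Rperm_inv_mul_Lperm_mul_Rperm (x y : Q) :
    (Rperm x)⁻¹ * Lperm y * Rperm x = (Lperm (linv x))⁻¹ * Lperm (linv x * y) := by
  ext z
  change rd (y * (z * x)) x = ld (linv x) (linv x * y * z)
  conv_lhs => rw [← ld_mul (linv x) y, hQ.ld_linv_mul_mul, mul_rd]

theorem Lperm_inv_mul_Rperm_mul_Lperm (x y : Q) :
    (Lperm x)⁻¹ * Rperm y * Lperm x = (Rperm (rinv x))⁻¹ * Rperm (y * rinv x) := by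
  ext z
  change ld x (x * z * y) = rd (z * (y * rinv x)) (rinv x)
  rw [← ld_mul x z, hQ.ld_mul_mul_rinv, ld_mul, mul_rd]

theorem Rperm_mul_Lperm_mul_Rperm_inv (x y : Q) :
    Rperm x * Lperm y * (Rperm x)⁻¹ = (Lperm x)⁻¹ * Lperm (ld (linv x) y) := by
  ext z
  change y * rd z x * x = ld x (ld (linv x) y * z)
  have h := hQ x y (rd z x)
  rw [rd_mul] at h
  rw [h, ld_mul]

theorem Lperm_mul_Rperm_mul_Lperm_inv (x y : Q) :
    Lperm x * Rperm y * (Lperm x)⁻¹ = (Rperm x)⁻¹ * Rperm (rd y (rinv x)) := by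
  have hx : (Lperm x)⁻¹ * Rperm x * Lperm x = (Rperm (rinv x))⁻¹ := by
    rw [hQ.Lperm_inv_mul_Rperm_mul_Lperm, mul_rinv, Rperm_one, _root_.mul_one]
  have hy := hQ.Lperm_inv_mul_Rperm_mul_Lperm x (rd y (rinv x))
  rw [rd_mul, ← hx] at hy
  calc Lperm x * Rperm y * (Lperm x)⁻¹
      = (Rperm x)⁻¹ * (Lperm x * ((Lperm x)⁻¹ * Rperm x * Lperm x * Rperm y) * (Lperm x)⁻¹) := by
        group
    _ = (Rperm x)⁻¹ * (Lperm x * ((Lperm x)⁻¹ * Rperm (rd y (rinv x)) * Lperm x) * (Lperm x)⁻¹) := by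
        rw [hy]
    _ = (Rperm x)⁻¹ * Rperm (rd y (rinv x)) := by group

theorem Mlt_le_normalizer_MltL : Mlt Q ≤ Subgroup.normalizer (MltL Q : Set (Equiv.Perm Q)) := by
  refine (Subgroup.closure_le _).mpr ?_
  rintro _ (⟨x, rfl⟩ | ⟨x, rfl⟩)
  · exact Subgroup.le_normalizer (Lperm_mem_MltL x)
  · refine Subgroup.mem_normalizer_closure_of_conj_mem ?_ ?_ <;> rintro _ ⟨y, rfl⟩
    · rw [hQ.Rperm_mul_Lperm_mul_Rperm_inv]
      exact mul_mem (inv_mem (Lperm_mem_MltL _)) (Lperm_mem_MltL _)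
    · rw [hQ.Rperm_inv_mul_Lperm_mul_Rperm]
      exact mul_mem (inv_mem (Lperm_mem_MltL _)) (Lperm_mem_MltL _)

theorem Mlt_le_normalizer_MltR : Mlt Q ≤ Subgroup.normalizer (MltR Q : Set (Equiv.Perm Q)) := by
  refine (Subgroup.closure_le _).mpr ?_
  rintro _ (⟨x, rfl⟩ | ⟨x, rfl⟩)
  · refine Subgroup.mem_normalizer_closure_of_conj_mem ?_ ?_ <;> rintro _ ⟨y, rfl⟩
    · rw [hQ.Lperm_mul_Rperm_mul_Lperm_inv]
      exact mul_mem (inv_mem (Rperm_mem_MltR _)) (Rperm_mem_MltR _)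
    · rw [hQ.Lperm_inv_mul_Rperm_mul_Lperm]
      exact mul_mem (inv_mem (Rperm_mem_MltR _)) (Rperm_mem_MltR _)
  · exact Subgroup.le_normalizer (Rperm_mem_MltR x)

end IsOsborn

end Loop

open Loop in
theorem stmt17 {Q : Type*} [Loop Q]
    (hosb : ∀ x y z : Q, ld (linv x) y * (z * x) = x * ((y * z) * x)) :
    (∀ x y : Q,
      (Rperm x)⁻¹ * Lperm y * Rperm x = (Lperm (linv x))⁻¹ * Lperm (linv x * y) ∧
      (Lperm x)⁻¹ * Rperm y * Lperm x = (Rperm (rinv x))⁻¹ * Rperm (y * rinv x)) ∧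
    (∀ g ∈ Mlt Q, ∀ h ∈ MltL Q, g * h * g⁻¹ ∈ MltL Q) ∧
    (∀ g ∈ Mlt Q, ∀ h ∈ MltR Q, g * h * g⁻¹ ∈ MltR Q) := by
  have hQ : IsOsborn Q := hosb
  exact ⟨fun x y => ⟨hQ.Rperm_inv_mul_Lperm_mul_Rperm x y, hQ.Lperm_inv_mul_Rperm_mul_Lperm x y⟩,
    Subgroup.le_normalizer_iff.mp hQ.Mlt_le_normalizer_MltL,
    Subgroup.le_normalizer_iff.mp hQ.Mlt_le_normalizer_MltR⟩
end
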